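/- arXiv:math/0205260 — 7 statements merged into one kernel-verified Lean document; each statement's English description precedes it below -/
import Mathlib

section
/- Let λ be a partition in the k×l box and let μ = bar(λ). Then μ is again a partition in the k×l box, i.e., k ≥ μ_1 ≥ μ_2 ≥ … ≥ μ_l ≥ 0. -/
/-- `lam` (1-indexed; the relevant entries are `lam 1, …, lam l`) is a partition in the
`k × l` box, i.e. `k ≥ λ₁ ≥ λ₂ ≥ … ≥ λ_l ≥ 0`. -/
def IsBoxPartition (k l : ℕ) (lam : ℕ → ℤ) : Prop :=
  lam 1 ≤ (k : ℤ) ∧ (∀ i : ℕ, 1 ≤ i → i < l → lam (i + 1) ≤ lam i) ∧ 0 ≤ lam l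

/-- The Durfee number `d_λ`: the largest `i ∈ {1, …, l}` with `λ_i ≥ i`, and `0` if
no such `i` exists. -/
def durfee (l : ℕ) (lam : ℕ → ℤ) : ℕ :=
  (Finset.Icc 1 l).sup (fun i => if (i : ℤ) ≤ lam i then i else 0)

/-- The bar map `λ ↦ bar(λ)`:
`bar(λ)_i = d_λ + k − λ_{d_λ − i + 1}` for `1 ≤ i ≤ d_λ` and
`bar(λ)_i = d_λ − λ_{l − i + d_λ + 1}` for `d_λ < i ≤ l`. -/
def bar (k l : ℕ) (lam : ℕ → ℤ) : ℕ → ℤ := fun i =>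
  if i ≤ durfee l lam then
    (durfee l lam : ℤ) + (k : ℤ) - lam (durfee l lam - i + 1)
  else
    (durfee l lam : ℤ) - lam (l - i + durfee l lam + 1)

/-- The size `|λ| = λ₁ + ⋯ + λ_l` of a partition in the `k × l` box. -/
def boxSize (l : ℕ) (lam : ℕ → ℤ) : ℤ :=
  ∑ i ∈ Finset.Icc 1 l, lam i

/-- The Poincaré dual `κ̂` of a partition `κ` in the `k × l` box: `κ̂_i = k − κ_{l+1−i}`. -/
def dualP (k l : ℕ) (kap : ℕ → ℤ) : ℕ → ℤ := fun i =>
  (k : ℤ) - kap (l + 1 - i)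

lemma lam_anti {l : ℕ} {lam : ℕ → ℤ}
    (h : ∀ i : ℕ, 1 ≤ i → i < l → lam (i + 1) ≤ lam i) :
    ∀ a b : ℕ, 1 ≤ a → a ≤ b → b ≤ l → lam b ≤ lam a := by
  intro a b ha hab hbl
  induction b with
  | zero => omega
  | succ n ih =>
    rcases eq_or_lt_of_le hab with rfl | h'
    · exact le_refl _
    · exact (h n (by omega) (by omega)).trans (ih (by omega) (by omega))

lemma durfee_le (l : ℕ) (lam : ℕ → ℤ) : durfee l lam ≤ l := by
  apply Finset.sup_le
  intro i hi
  simp only [Finset.mem_Icc] at hi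
  split <;> omega

lemma lam_durfee {l : ℕ} (hl : 1 ≤ l) (lam : ℕ → ℤ) (hd : 1 ≤ durfee l lam) :
    (durfee l lam : ℤ) ≤ lam (durfee l lam) := by
  obtain ⟨i, hi, hfi⟩ := Finset.exists_mem_eq_sup (Finset.Icc 1 l)
    ⟨1, Finset.mem_Icc.mpr ⟨le_refl _, hl⟩⟩
    (fun i : ℕ => if (i : ℤ) ≤ lam i then i else 0)
  rw [durfee] at hd ⊢
  rw [hfi] at hd ⊢
  by_cases hcond : (i : ℤ) ≤ lam i
  · simpa [if_pos hcond] using hcond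
  · rw [if_neg hcond] at hd; omega

lemma lam_lt_of_gt_durfee {l : ℕ} (lam : ℕ → ℤ) {j : ℕ}
    (hj : durfee l lam < j) (hjl : j ≤ l) : lam j < (j : ℤ) := by
  by_contra h
  push_neg at h
  have hj1 : 1 ≤ j := by omega
  have h2 := Finset.le_sup (f := fun i : ℕ => if (i : ℤ) ≤ lam i then i else 0)
    (Finset.mem_Icc.mpr ⟨hj1, hjl⟩)
  simp only [if_pos h] at h2
  rw [durfee] at hj
  omega

/-- If `λ` is a partition in the `k × l` box, then `bar(λ)` is again a
partition in the `k × l` box. -/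
theorem bar_isBoxPartition (k l : ℕ) (hk : 1 ≤ k) (hl : 1 ≤ l)
    (lam : ℕ → ℤ) (hlam : IsBoxPartition k l lam) :
    IsBoxPartition k l (bar k l lam) := by
  obtain ⟨h1, hmono, hll⟩ := hlam
  set d := durfee l lam with hd
  have hdl : d ≤ l := durfee_le l lam
  have anti := lam_anti hmono
  refine ⟨?_, ?_, ?_⟩
  · -- bar 1 ≤ k
    by_cases hd1 : 1 ≤ d
    · have hld := lam_durfee hl lam hd1
      simp only [bar, if_pos hd1, ← hd]
      have : d - 1 + 1 = d := by omega
      rw [this]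
      linarith
    · have hd0 : d = 0 := by omega
      simp only [bar, ← hd, hd0]
      rw [if_neg (by omega)]
      have : l - 1 + 0 + 1 = l := by omega
      rw [this]
      push_cast
      linarith
  · -- monotone
    intro i hi1 hil
    simp only [bar, ← hd]
    rcases lt_trichotomy i d with hcase | hcase | hcase
    · -- i + 1 ≤ d : both first branch
      rw [if_pos (by omega : i + 1 ≤ d), if_pos (by omega : i ≤ d)]
      have e1 : d - (i + 1) + 1 = d - i := by omega
      rw [e1]
      have : lam (d - i + 1) ≤ lam (d - i) := by
        have := hmono (d - i) (by omega) (by omega)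
        simpa using this
      linarith
    · -- i = d
      rw [if_neg (by omega), if_pos (by omega)]
      have e1 : d - i + 1 = 1 := by omega
      have e2 : l - (i + 1) + d + 1 = l := by omega
      rw [e1, e2]
      linarith
    · -- i > d : both second branch
      rw [if_neg (by omega), if_neg (by omega)]
      have e1 : l - (i + 1) + d + 1 = l - i + d := by omega
      rw [e1]
      have : lam (l - i + d + 1) ≤ lam (l - i + d) := hmono (l - i + d) (by omega) (by omega)
      linarith
  · -- bar l ≥ 0
    by_cases hcase : d = l
    · simp only [bar, ← hd, hcase]
      rw [if_pos (le_refl _)]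
      have : l - l + 1 = 1 := by omega
      rw [this]
      have : lam 1 ≤ (k : ℤ) := h1
      linarith
    · have hlt : d < l := by omega
      simp only [bar, ← hd]
      rw [if_neg (by omega)]
      have e1 : l - l + d + 1 = d + 1 := by omega
      rw [e1]
      have := lam_lt_of_gt_durfee lam (show durfee l lam < d + 1 by omega) (by omega)
      have h2 : (((d : ℕ) + 1 : ℕ) : ℤ) = (d : ℤ) + 1 := by push_cast; ring
      rw [h2] at this
      linarith
end

section
/- Let λ be a partition in the k×l box. Then the Durfee number is preserved by the bar map: d_{bar(λ)} = d_λ. -/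
/-! For `i > d = d_λ` the entry `bar(λ)_i = d − λ_j` is at most `d < i`, because `λ_j ≥ 0`; and
`bar(λ)_d = d + k − λ_1 ≥ d`, because `λ_1 ≤ k`. Hence `d` is again the largest `i` with
`bar(λ)_i ≥ i`. -/

namespace IsBoxPartition

variable {k l : ℕ} {lam : ℕ → ℤ}

theorem antitoneOn (h : IsBoxPartition k l lam) : AntitoneOn lam (Set.Icc 1 l) :=
  antitoneOn_of_succ_le Set.ordConnected_Icc fun i _ hi hi' => by
    rw [Order.succ_eq_add_one] at hi' ⊢
    exact h.2.1 i hi.1 (by simpa [Nat.add_one_le_iff] using hi'.2)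

theorem nonneg (h : IsBoxPartition k l lam) {j : ℕ} (hj : 1 ≤ j) (hjl : j ≤ l) : 0 ≤ lam j :=
  h.2.2.trans <| h.antitoneOn ⟨hj, hjl⟩ ⟨hj.trans hjl, le_rfl⟩ hjl

end IsBoxPartition

section Durfee

variable {l : ℕ} {mu : ℕ → ℤ}

theorem le_durfee {i : ℕ} (hil : i ≤ l) (hi : (i : ℤ) ≤ mu i) : i ≤ durfee l mu := by
  rcases Nat.eq_zero_or_pos i with rfl | hpos
  · exact Nat.zero_le _
  · simpa [durfee, hi] using Finset.le_sup (f := fun j : ℕ => if (j : ℤ) ≤ mu j then j else 0)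
      (Finset.mem_Icc.mpr ⟨hpos, hil⟩)

theorem durfee_le_of_forall_lt {d : ℕ} (h : ∀ i, d < i → i ≤ l → mu i < i) :
    durfee l mu ≤ d :=
  Finset.sup_le fun i hi => by
    by_cases hdi : d < i
    · simp [(h i hdi (Finset.mem_Icc.mp hi).2).not_ge]
    · split <;> omega

theorem durfee_le_length : durfee l mu ≤ l :=
  Finset.sup_le fun i hi => by
    have := (Finset.mem_Icc.mp hi).2
    split <;> omega

end Durfee

section Bar

variable {k l : ℕ} {lam : ℕ → ℤ}

theorem bar_durfee : bar k l lam (durfee l lam) = durfee l lam + k - lam 1 := by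
  simp [bar]

theorem bar_of_durfee_lt {i : ℕ} (hi : durfee l lam < i) :
    bar k l lam i = durfee l lam - lam (l - i + durfee l lam + 1) := by
  simp [bar, hi.not_ge]

theorem durfee_le_bar_durfee (h : IsBoxPartition k l lam) :
    (durfee l lam : ℤ) ≤ bar k l lam (durfee l lam) := by
  rw [bar_durfee]
  linarith [h.1]

theorem bar_lt_of_durfee_lt (h : IsBoxPartition k l lam) {i : ℕ} (hi : durfee l lam < i)
    (hil : i ≤ l) : bar k l lam i < i := by
  rw [bar_of_durfee_lt hi]
  have := h.nonneg (j := l - i + durfee l lam + 1) (by omega) (by omega)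
  omega

end Bar

theorem durfee_bar_general (k l : ℕ)
    (lam : ℕ → ℤ) (hlam : IsBoxPartition k l lam) :
    durfee l (bar k l lam) = durfee l lam :=
  le_antisymm (durfee_le_of_forall_lt fun _ hi hil => bar_lt_of_durfee_lt hlam hi hil)
    (le_durfee durfee_le_length (durfee_le_bar_durfee hlam))

/-- The Durfee number is preserved by the bar map: `d_{bar(λ)} = d_λ`. -/
theorem durfee_bar (k l : ℕ) (hk : 1 ≤ k) (hl : 1 ≤ l)
    (lam : ℕ → ℤ) (hlam : IsBoxPartition k l lam) :
    durfee l (bar k l lam) = durfee l lam :=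
  durfee_bar_general k l lam hlam
end

section
/- Let λ be a partition in the k×l box. Then the size of bar(λ) is |bar(λ)| = d_λ·(k + l) − |λ|; in particular |bar(λ)| ≡ −|λ| (mod n), where n = k + l. -/
lemma sum_reflect' (a b : ℕ) (f : ℕ → ℤ) :
    ∑ i ∈ Finset.Icc a b, f (a + b - i) = ∑ i ∈ Finset.Icc a b, f i := by
  refine Finset.sum_bij' (fun i _ => a + b - i) (fun i _ => a + b - i) ?_ ?_ ?_ ?_ ?_ <;>
    intro i hi <;> simp only [Finset.mem_Icc] at hi ⊢ <;> first | omega | (congr 1; omega)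

lemma boxSize_bar_key (k l : ℕ) (lam : ℕ → ℤ) :
    boxSize l (bar k l lam) = (durfee l lam : ℤ) * ((k : ℤ) + l) - boxSize l lam := by
  set d := durfee l lam with hd
  have hdl : d ≤ l := durfee_le l lam
  unfold boxSize bar
  rw [← hd]
  have hsplit : ∑ i ∈ Finset.Icc 1 l,
      (if i ≤ d then (d : ℤ) + k - lam (d - i + 1) else (d : ℤ) - lam (l - i + d + 1))
      = ∑ i ∈ Finset.Icc 1 d, ((d : ℤ) + k - lam (d - i + 1))
        + ∑ i ∈ Finset.Icc (d+1) l, ((d : ℤ) - lam (l - i + d + 1)) := by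
    rw [show Finset.Icc 1 l = Finset.Ico 1 (l+1) by rw [Finset.Ico_add_one_right_eq_Icc],
      show Finset.Icc 1 d = Finset.Ico 1 (d+1) by rw [Finset.Ico_add_one_right_eq_Icc],
      show Finset.Icc (d+1) l = Finset.Ico (d+1) (l+1) by rw [Finset.Ico_add_one_right_eq_Icc],
      ← Finset.sum_Ico_consecutive _ (by omega : 1 ≤ d + 1) (by omega : d + 1 ≤ l + 1)]
    congr 1
    · exact Finset.sum_congr rfl fun i hi => by
        simp only [Finset.mem_Ico] at hi; rw [if_pos (by omega)]
    · exact Finset.sum_congr rfl fun i hi => by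
        simp only [Finset.mem_Ico] at hi; rw [if_neg (by omega)]
  rw [hsplit]
  have h1 : ∑ i ∈ Finset.Icc 1 d, ((d : ℤ) + k - lam (d - i + 1))
      = (d : ℤ) * ((d : ℤ) + k) - ∑ i ∈ Finset.Icc 1 d, lam i := by
    rw [Finset.sum_sub_distrib, Finset.sum_const, Nat.card_Icc]
    have h : ∑ i ∈ Finset.Icc 1 d, lam (d - i + 1) = ∑ i ∈ Finset.Icc 1 d, lam i := by
      rw [← sum_reflect' 1 d (fun j => lam j)]
      exact Finset.sum_congr rfl fun i hi => by
        simp only [Finset.mem_Icc] at hi; congr 1; omega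
    rw [h]
    push_cast
    ring
  have h2 : ∑ i ∈ Finset.Icc (d+1) l, ((d : ℤ) - lam (l - i + d + 1))
      = ((l : ℤ) - d) * d - ∑ i ∈ Finset.Icc (d+1) l, lam i := by
    rw [Finset.sum_sub_distrib, Finset.sum_const, Nat.card_Icc]
    have h : ∑ i ∈ Finset.Icc (d+1) l, lam (l - i + d + 1)
        = ∑ i ∈ Finset.Icc (d+1) l, lam i := by
      rw [← sum_reflect' (d+1) l (fun j => lam j)]
      exact Finset.sum_congr rfl fun i hi => by
        simp only [Finset.mem_Icc] at hi; congr 1; omega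
    rw [h, show l + 1 - (d + 1) = l - d from by omega, nsmul_eq_mul, Nat.cast_sub hdl]
  rw [h1, h2]
  have hsum : ∑ i ∈ Finset.Icc 1 d, lam i + ∑ i ∈ Finset.Icc (d+1) l, lam i
      = ∑ i ∈ Finset.Icc 1 l, lam i := by
    rw [show Finset.Icc 1 l = Finset.Ico 1 (l+1) by rw [Finset.Ico_add_one_right_eq_Icc],
      show Finset.Icc 1 d = Finset.Ico 1 (d+1) by rw [Finset.Ico_add_one_right_eq_Icc],
      show Finset.Icc (d+1) l = Finset.Ico (d+1) (l+1) by rw [Finset.Ico_add_one_right_eq_Icc]]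
    exact Finset.sum_Ico_consecutive _ (by omega) (by omega)
  push_cast at *
  linarith

/-- `|bar(λ)| = d_λ·(k + l) − |λ|`; in particular
`|bar(λ)| ≡ −|λ| (mod n)` where `n = k + l`. -/
theorem boxSize_bar (k l : ℕ) (hk : 1 ≤ k) (hl : 1 ≤ l)
    (lam : ℕ → ℤ) (hlam : IsBoxPartition k l lam) :
    boxSize l (bar k l lam) = (durfee l lam : ℤ) * ((k : ℤ) + l) - boxSize l lam ∧
      boxSize l (bar k l lam) ≡ -boxSize l lam [ZMOD ((k : ℕ) + l)] := by
  have key := boxSize_bar_key k l lam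
  refine ⟨key, ?_⟩
  rw [key]
  exact Int.modEq_iff_dvd.mpr ⟨-(durfee l lam : ℤ), by push_cast; ring⟩
end

section
/- Let λ be a partition in the k×l box with Durfee number d = d_λ. Then the Poincaré dual of bar(λ) is given by the cyclic shift formula: writing ν for the Poincaré dual of bar(λ), one has ν_i = k − d + λ_{d + i} for 1 ≤ i ≤ l − d, and ν_i = λ_{d − l + i} − d for l − d < i ≤ l. (This is the combinatorial content of the paper's Lemma identifying the bar map with the composition of Poincaré duality and the k-th power of the Agnihotri–Woodward cyclic action c.) -/
/-- With `d = d_λ` and `ν` the Poincaré dual of `bar(λ)`, one has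
`ν_i = k − d + λ_{d+i}` for `1 ≤ i ≤ l − d` and `ν_i = λ_{d−l+i} − d` for `l − d < i ≤ l`. -/
theorem dualP_bar (k l : ℕ) (hk : 1 ≤ k) (hl : 1 ≤ l)
    (lam : ℕ → ℤ) (hlam : IsBoxPartition k l lam) :
    (∀ i : ℕ, 1 ≤ i → i + durfee l lam ≤ l →
        dualP k l (bar k l lam) i = (k : ℤ) - durfee l lam + lam (durfee l lam + i)) ∧
    (∀ i : ℕ, l < i + durfee l lam → i ≤ l →
        dualP k l (bar k l lam) i = lam (durfee l lam + i - l) - durfee l lam) := by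
  have hd : durfee l lam ≤ l := by
    apply Finset.sup_le
    intro i hi
    simp only [Finset.mem_Icc] at hi
    split <;> omega
  constructor
  · intro i hi hil
    have h1 : ¬ (l + 1 - i ≤ durfee l lam) := by omega
    have h2 : l - (l + 1 - i) + durfee l lam + 1 = durfee l lam + i := by omega
    simp only [dualP, bar, if_neg h1, h2]
    ring
  · intro i hi hil
    have h1 : l + 1 - i ≤ durfee l lam := by omega
    have h2 : durfee l lam - (l + 1 - i) + 1 = durfee l lam + i - l := by omega
    simp only [dualP, bar, if_pos h1, h2]
    ring
end

section
/- Under the standing hypotheses on (X, A₀, σ), for every a ∈ A₀ and every x ∈ X one has a(x) = 0 if and only if σ(a)(x) = 0. (This is the abstract form of Lemma 'lemns' of the paper: a class vanishes at a point of Spec R iff its bar involute does.) -/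
theorem vanish_aux {X : Type*} (A₀ : AddSubgroup (X → ℂ))
    (σ : (X → ℂ) →+ (X → ℂ))
    (hmem : ∀ a ∈ A₀, σ a ∈ A₀)
    (hinv : ∀ a ∈ A₀, σ (σ a) = a)
    (hpos : ∀ a ∈ A₀, ∀ x : X, (a x * σ a x).im = 0 ∧ 0 ≤ (a x * σ a x).re) :
    ∀ a ∈ A₀, ∀ x : X, a x = 0 → σ a x = 0 := by
  intro a ha x h0
  have hb := hpos (a + σ a) (A₀.add_mem ha (hmem a ha)) x
  have hc := hpos (a - σ a) (A₀.sub_mem ha (hmem a ha)) x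
  simp only [map_add, map_sub, hinv a ha] at hb hc
  simp only [Pi.add_apply, Pi.sub_apply, h0, zero_add, add_zero, zero_sub, sub_zero] at hb hc
  set v := σ a x with hv
  have hb' : (v * v).im = 0 ∧ 0 ≤ (v * v).re := by
    simpa using hb
  have hc' : ((-v) * v).im = 0 ∧ 0 ≤ ((-v) * v).re := by
    simpa using hc
  have h1 : (v * v).re = 0 := by
    have := hc'.2
    simp only [neg_mul, Complex.neg_re, neg_nonneg] at this
    linarith [hb'.2]
  have : v * v = 0 := Complex.ext h1 hb'.1
  exact mul_self_eq_zero.mp this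

/-- If `A₀` is an additive subgroup of the complex-valued functions on `X`,
`σ` is an additive map preserving `A₀` and restricting to an involution of `A₀`, and
`a(x)·σ(a)(x)` is a nonnegative real number for all `a ∈ A₀`, `x ∈ X`, then for every
`a ∈ A₀` and every `x` one has `a(x) = 0 ↔ σ(a)(x) = 0`. -/
theorem vanish_iff_bar_vanish {X : Type*} (A₀ : AddSubgroup (X → ℂ))
    (σ : (X → ℂ) →+ (X → ℂ))
    (hmem : ∀ a ∈ A₀, σ a ∈ A₀)
    (hinv : ∀ a ∈ A₀, σ (σ a) = a)
    (hpos : ∀ a ∈ A₀, ∀ x : X, (a x * σ a x).im = 0 ∧ 0 ≤ (a x * σ a x).re) :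
    ∀ a ∈ A₀, ∀ x : X, a x = 0 ↔ σ a x = 0 := by
  intro a ha x
  constructor
  · exact vanish_aux A₀ σ hmem hinv hpos a ha x
  · intro h
    have := vanish_aux A₀ σ hmem hinv hpos (σ a) (hmem a ha) x h
    rwa [hinv a ha] at this
end

section
/- Under the standing hypotheses on (X, A₀, σ), for every a ∈ A₀ and every x ∈ X, either a(x) = 0 and σ(a)(x) = 0, or there exists a real number r > 0 such that σ(a)(x) = r · conj(a(x)); equivalently, writing a = u + iv with u, v real-valued, σ(a) agrees pointwise with r·(u − iv) for some positive real-valued function r on the set where a does not vanish. (This is the abstract form of Lemma 'prop1' of the paper.) -/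
/-- Under the standing hypotheses on `(X, A₀, σ)`, for every `a ∈ A₀` and
every `x ∈ X`, either `a(x) = 0 = σ(a)(x)`, or there is a real `r > 0` with
`σ(a)(x) = r · conj(a(x))`. -/
theorem bar_eq_pos_mul_conj {X : Type*} (A₀ : AddSubgroup (X → ℂ))
    (σ : (X → ℂ) →+ (X → ℂ))
    (hmem : ∀ a ∈ A₀, σ a ∈ A₀)
    (hinv : ∀ a ∈ A₀, σ (σ a) = a)
    (hpos : ∀ a ∈ A₀, ∀ x : X, (a x * σ a x).im = 0 ∧ 0 ≤ (a x * σ a x).re) :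
    ∀ a ∈ A₀, ∀ x : X,
      (a x = 0 ∧ σ a x = 0) ∨
        ∃ r : ℝ, 0 < r ∧ σ a x = (r : ℂ) * starRingEnd ℂ (a x) := by
  intro a ha x
  right
  refine ⟨1, one_pos, ?_⟩
  have hb := hpos (a + σ a) (A₀.add_mem ha (hmem a ha)) x
  have hc := hpos (a - σ a) (A₀.sub_mem ha (hmem a ha)) x
  simp only [map_add, map_sub, hinv a ha, Pi.add_apply, Pi.sub_apply,
    Complex.mul_im, Complex.mul_re, Complex.add_re, Complex.add_im,
    Complex.sub_re, Complex.sub_im] at hb hc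
  set p := (a x).re
  set q := (a x).im
  set s := (σ a x).re
  set t := (σ a x).im
  have h1 : (p + s) * (q + t) = 0 := by linear_combination hb.1 / 2
  have h2 : (p - s) * (q - t) = 0 := by linear_combination - hc.1 / 2
  have hqt : q + t = 0 := by
    rcases mul_eq_zero.mp h1 with h | h
    · nlinarith [hb.2, sq_nonneg (q + t)]
    · exact h
  have hps : p - s = 0 := by
    rcases mul_eq_zero.mp h2 with h | h
    · exact h
    · nlinarith [hc.2, sq_nonneg (p - s)]
  apply Complex.ext <;>
    simp only [Complex.mul_re, Complex.mul_im, Complex.one_re, Complex.one_im,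
      Complex.ofReal_one, Complex.conj_re, Complex.conj_im] <;>
    · show _ = _
      linarith
end

section
/- Under the standing hypotheses on (X, A₀, σ), for every a ∈ A₀ and every x ∈ X one has σ(a)(x) = conj(a(x)), i.e., σ acts on A₀ as pointwise complex conjugation. (This is the abstract form of the paper's final Theorem, combining Proposition 'Prop3' with Lemma 'prop1': the bar involution on the quantum cohomology ring of the Grassmannian is, at the function level, complex conjugation.) -/
/-- Helper: the real-variable core of the argument. -/
lemma bar_eq_conj_aux (zr zi wr wi : ℝ)
    (h1i : (zr + wr) * (wi + zi) + (zi + wi) * (wr + zr) = 0)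
    (h1r : 0 ≤ (zr + wr) * (wr + zr) - (zi + wi) * (wi + zi))
    (h2i : (zr - wr) * (wi - zi) + (zi - wi) * (wr - zr) = 0)
    (h2r : 0 ≤ (zr - wr) * (wr - zr) - (zi - wi) * (wi - zi)) :
    wr = zr ∧ wi = -zi := by
  have ht : (zi + wi) = 0 := by
    have h4 : ((zi+wi)^2)^2 ≤ 0 := by
      nlinarith [sq_nonneg (zi+wi), mul_nonneg (sq_nonneg (zi+wi)) h1r]
    have := pow_eq_zero_iff (n := 2) (by norm_num) |>.mp (le_antisymm h4 (sq_nonneg _))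
    exact pow_eq_zero_iff (n := 2) (by norm_num) |>.mp this
  have hu : (zr - wr) = 0 := by
    have h4 : ((zr-wr)^2)^2 ≤ 0 := by
      nlinarith [sq_nonneg (zr-wr), mul_nonneg (sq_nonneg (zr-wr)) h2r]
    have := pow_eq_zero_iff (n := 2) (by norm_num) |>.mp (le_antisymm h4 (sq_nonneg _))
    exact pow_eq_zero_iff (n := 2) (by norm_num) |>.mp this
  constructor <;> linarith

/-- Under the standing hypotheses on `(X, A₀, σ)`, the involution `σ` acts
on `A₀` as pointwise complex conjugation: `σ(a)(x) = conj(a(x))` for all `a ∈ A₀`, `x ∈ X`. -/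
theorem bar_eq_conj {X : Type*} (A₀ : AddSubgroup (X → ℂ))
    (σ : (X → ℂ) →+ (X → ℂ))
    (hmem : ∀ a ∈ A₀, σ a ∈ A₀)
    (hinv : ∀ a ∈ A₀, σ (σ a) = a)
    (hpos : ∀ a ∈ A₀, ∀ x : X, (a x * σ a x).im = 0 ∧ 0 ≤ (a x * σ a x).re) :
    ∀ a ∈ A₀, ∀ x : X, σ a x = starRingEnd ℂ (a x) := by
  intro a ha x
  have hsa := hmem a ha
  have h1 := hpos (a + σ a) (A₀.add_mem ha hsa) x
  have h2 := hpos (a - σ a) (A₀.sub_mem ha hsa) x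
  rw [map_add, hinv a ha] at h1
  rw [map_sub, hinv a ha] at h2
  set z := a x with hz
  set w := σ a x with hw
  simp only [Pi.add_apply, Pi.sub_apply, ← hz, ← hw] at h1 h2
  obtain ⟨h1i, h1r⟩ := h1
  obtain ⟨h2i, h2r⟩ := h2
  simp only [Complex.ext_iff, Complex.add_im, Complex.add_re, Complex.sub_im,
    Complex.sub_re, Complex.mul_im, Complex.mul_re, Complex.conj_re,
    Complex.conj_im] at h1i h1r h2i h2r ⊢
  exact bar_eq_conj_aux z.re z.im w.re w.im h1i h1r h2i h2r
end
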